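/- Let m be a nonnegative integer and let a be a complex number with 0 < |a| < 1. Then ζ(2m+1; a) + ζ(2m+1; −a) − 2ζ(2m+1) = 2 Σ_{j=1}^∞ C(2j+2m, 2j)·ζ(2m+2j+1)·a^{2j}, i.e., the left-hand side is the sum of the convergent power series in a with coefficients 2·C(2j+2m, 2j)·ζ(2m+2j+1) at a^{2j}, where C(·,·) denotes binomial coefficients. -/

import Mathlib

open Complex Finset Real

/-- Generalized harmonic number `H_n^{(p)}` as a complex number. -/
noncomputable def gH (p n : ℕ) : ℂ := ∑ k ∈ Finset.range n, (1 : ℂ) / ((k : ℂ) + 1) ^ p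

/-- Complex digamma function, defined via its series expansion. -/
noncomputable def digammaC (a : ℂ) : ℂ :=
  -(Real.eulerMascheroniConstant : ℂ) + ∑' n : ℕ, ((1 : ℂ) / ((n : ℂ) + 1) - 1 / ((n : ℂ) + a))

/-- Polygamma function `ψ^{(j)}` of order `j` (with `ψ^{(0)} = ψ`). -/
noncomputable def polygammaC (j : ℕ) (a : ℂ) : ℂ :=
  if j = 0 then digammaC a
  else (-1 : ℂ) ^ (j + 1) * (Nat.factorial j) * ∑' k : ℕ, (1 : ℂ) / (a + (k : ℂ)) ^ (j + 1)

/-- Hurwitz zeta value `ζ(s; a)` at integer `s ≥ 1`, with the convention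
`ζ(1; a) = -(ψ(a) + γ)`. -/
noncomputable def hzeta (s : ℕ) (a : ℂ) : ℂ :=
  if s = 1 then -(digammaC a + (Real.eulerMascheroniConstant : ℂ))
  else ∑' n : ℕ, (1 : ℂ) / ((n : ℂ) + a) ^ s

/-- Riemann zeta value at a nonnegative integer, with the conventions
`ζ(0) = -1/2` and `ζ(1) = 0`. -/
noncomputable def zval (s : ℕ) : ℂ :=
  if s = 0 then -1/2 else if s = 1 then 0 else ∑' n : ℕ, (1 : ℂ) / ((n : ℂ) + 1) ^ s

/-- Alternating Riemann zeta value `ζ̄(s) = Σ_{n≥1} (-1)^{n-1}/n^s`, with the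
convention `ζ̄(0) = 1/2`. -/
noncomputable def azval (s : ℕ) : ℂ :=
  if s = 0 then 1/2 else ∑' n : ℕ, (-1 : ℂ) ^ n / ((n : ℂ) + 1) ^ s

/-- Alternating Hurwitz zeta value `ζ̄(s; a) = Σ_{n≥0} (-1)^n/(n+a)^s`. -/
noncomputable def ahzeta (s : ℕ) (a : ℂ) : ℂ :=
  ∑' n : ℕ, (-1 : ℂ) ^ n / ((n : ℂ) + a) ^ s

/-- Alternating double zeta value `ζ(overline{2j}, 2m+1)`. -/
noncomputable def altDoubleZeta (j m : ℕ) : ℂ :=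
  ∑' n : ℕ, (-1 : ℂ) ^ (n + 1) * gH (2 * m + 1) n / ((n : ℂ) + 1) ^ (2 * j)

/-!
Write `s = 2m + 1`. Since `(n ± a)⁻ˢ = n⁻ˢ ∑ₖ C(k + 2m, 2m) (∓a / n)ᵏ` for `n ≥ 1 > ‖a‖`, the sum
`(n + a)⁻ˢ + (n - a)⁻ˢ - 2n⁻ˢ` keeps only the even powers `k = 2j + 2`, each twice. The resulting
double series over `(j, n)` converges absolutely, so it can be summed in either order: over `n`
first it gives the power series with the values `ζ(s + 2j + 2)`, over `j` first it gives
`ζ(s; a) + ζ(s; -a) - 2ζ(s)`, because the terms `n = 0` of the two Hurwitz series, `a⁻ˢ + (-a)⁻ˢ`,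
cancel for odd `s`. When `s = 1`, `ζ(1; a)` is the digamma series `∑ (1/(n + a) - 1/(n + 1))`, and
shifting it by one index costs the telescoping sum `∑ (1/(n + 1) - 1/(n + 2)) = 1`.
-/

open Filter Topology Asymptotics

theorem HasSum.fiberwise_comm {α β γ : Type*} [AddCommMonoid α] [TopologicalSpace α]
    [ContinuousAdd α] [T3Space α] {f : β × γ → α} {u : β → α} {v : γ → α} {s : α}
    (hs : HasSum v s) (hf : Summable f) (hu : ∀ b, HasSum (fun c ↦ f (b, c)) (u b))
    (hv : ∀ c, HasSum (fun b ↦ f (b, c)) (v c)) : HasSum u s := by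
  have hswap := ((Equiv.prodComm γ β).hasSum_iff.2 hf.hasSum).prod_fiberwise hv
  rw [hs.unique hswap]
  exact hf.hasSum.prod_fiberwise hu

theorem hasSum_sub_succ_of_tendsto {α : Type*} [AddCommGroup α] [TopologicalSpace α]
    [IsTopologicalAddGroup α] [T2Space α] {u : ℕ → α} {l : α}
    (hsum : Summable fun n ↦ u n - u (n + 1)) (hu : Tendsto u atTop (𝓝 l)) :
    HasSum (fun n ↦ u n - u (n + 1)) (u 0 - l) := by
  rw [hsum.hasSum_iff_tendsto_nat]
  simpa only [Finset.sum_range_sub'] using hu.const_sub (u 0)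

theorem HasSum.comp_two_mul_of_odd_eq_zero {α : Type*} [AddCommMonoid α] [TopologicalSpace α]
    {f : ℕ → α} {a : α} (hf : HasSum f a) (hodd : ∀ k, Odd k → f k = 0) :
    HasSum (fun j ↦ f (2 * j)) a := by
  refine (Function.Injective.hasSum_iff (g := (2 * ·)) (mul_right_injective₀ two_ne_zero)
    fun k hk ↦ hodd k ?_).2 hf
  exact Nat.not_even_iff_odd.1 fun ⟨r, hr⟩ ↦ hk ⟨r, by dsimp only; omega⟩

theorem eventually_natCast_add_ne_zero (c : ℂ) : ∀ᶠ n : ℕ in atTop, (n : ℂ) + c ≠ 0 := by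
  filter_upwards [(tendsto_natCast_atTop_atTop (R := ℝ)).eventually_gt_atTop ‖c‖] with n hn h
  have := congrArg norm (add_eq_zero_iff_neg_eq.1 h)
  simp only [norm_neg, Complex.norm_natCast] at this
  linarith

theorem isBigO_inv_natCast_add (c : ℂ) :
    (fun n : ℕ ↦ ((n : ℂ) + c)⁻¹) =O[atTop] fun n ↦ ((n : ℝ))⁻¹ := by
  have hnorm : Tendsto (norm ∘ fun n : ℕ ↦ (n : ℂ)) atTop atTop := by
    simpa [Function.comp_def] using tendsto_natCast_atTop_atTop (R := ℝ)
  refine (IsEquivalent.refl.add_const_of_norm_tendsto_atTop (c := c) hnorm).inv.isBigO.trans ?_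
  exact isBigO_of_le _ fun n ↦ by simp

theorem summable_one_div_natCast_add_pow (c : ℂ) {s : ℕ} (hs : 2 ≤ s) :
    Summable fun n : ℕ ↦ 1 / ((n : ℂ) + c) ^ s := by
  refine summable_of_isBigO_nat' (Real.summable_nat_pow_inv.2 hs) ?_
  simpa [one_div, inv_pow] using (isBigO_inv_natCast_add c).pow s

theorem summable_one_div_natCast_add_sub (c d : ℂ) :
    Summable fun n : ℕ ↦ 1 / ((n : ℂ) + c) - 1 / ((n : ℂ) + d) := by
  refine summable_of_isBigO_nat' (Real.summable_nat_pow_inv.2 one_lt_two) ?_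
  have hprod := ((isBigO_inv_natCast_add c).mul (isBigO_inv_natCast_add d)).const_mul_left (d - c)
  refine hprod.congr' ?_ (by filter_upwards with n; ring)
  filter_upwards [eventually_natCast_add_ne_zero c, eventually_natCast_add_ne_zero d]
    with n hc hd
  field_simp
  ring

theorem norm_natCast_add_one (n : ℕ) : ‖(n : ℂ) + 1‖ = n + 1 :=
  mod_cast Complex.norm_natCast (n + 1)

theorem hasSum_zval {s : ℕ} (hs : 2 ≤ s) :
    HasSum (fun n : ℕ ↦ 1 / ((n : ℂ) + 1) ^ s) (zval s) := by
  rw [zval, if_neg (by omega), if_neg (by omega)]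
  exact (summable_one_div_natCast_add_pow 1 hs).hasSum

theorem hasSum_hzeta {s : ℕ} (hs : 2 ≤ s) (c : ℂ) :
    HasSum (fun n : ℕ ↦ 1 / ((n : ℂ) + c) ^ s) (hzeta s c) := by
  rw [hzeta, if_neg (by omega)]
  exact (summable_one_div_natCast_add_pow c hs).hasSum

theorem hasSum_hzeta_one (c : ℂ) :
    HasSum (fun n : ℕ ↦ 1 / ((n : ℂ) + c) - 1 / ((n : ℂ) + 1)) (hzeta 1 c) := by
  rw [hzeta, if_pos rfl, digammaC, neg_add_cancel_comm]
  exact (summable_one_div_natCast_add_sub 1 c).hasSum.neg.congr_fun fun n ↦ by ring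

theorem hasSum_one_div_add_one_sub_one_div_add_two :
    HasSum (fun n : ℕ ↦ 1 / ((n : ℂ) + 1) - 1 / ((n : ℂ) + 2)) 1 := by
  have h := hasSum_sub_succ_of_tendsto (u := fun n : ℕ ↦ 1 / ((n : ℂ) + 1)) ?_
    tendsto_one_div_add_atTop_nhds_zero_nat
  · simpa [add_assoc, one_add_one_eq_two] using h
  · simpa [add_assoc, one_add_one_eq_two] using summable_one_div_natCast_add_sub 1 2

theorem hasSum_hzeta_sub_zval {s : ℕ} (hs : s ≠ 0) (c : ℂ) :
    HasSum (fun n : ℕ ↦ 1 / ((n : ℂ) + 1 + c) ^ s - 1 / ((n : ℂ) + 1) ^ s)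
      (hzeta s c - 1 / c ^ s - zval s) := by
  obtain rfl | hs1 := eq_or_ne s 1
  · have h := ((hasSum_nat_add_iff' 1).2 (hasSum_hzeta_one c)).sub
      hasSum_one_div_add_one_sub_one_div_add_two
    simp only [Finset.sum_range_one, Nat.cast_zero, zero_add] at h
    simp only [pow_one, show zval 1 = 0 by simp [zval],
      show hzeta 1 c - 1 / c - 0 = hzeta 1 c - (1 / c - 1 / 1) - 1 by ring]
    exact h.congr_fun fun n ↦ by push_cast; ring
  · have hs2 : 2 ≤ s := by omega
    have h := ((hasSum_nat_add_iff' 1).2 (hasSum_hzeta hs2 c)).sub (hasSum_zval hs2)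
    simp only [Finset.sum_range_one, Nat.cast_zero, zero_add] at h
    exact h.congr_fun fun n ↦ by push_cast; ring_nf

theorem hasSum_hzeta_add_hzeta_neg_sub (m : ℕ) (a : ℂ) :
    HasSum (fun n : ℕ ↦ 1 / ((n : ℂ) + 1 + a) ^ (2 * m + 1) +
        1 / ((n : ℂ) + 1 - a) ^ (2 * m + 1) - 2 * (1 / ((n : ℂ) + 1) ^ (2 * m + 1)))
      (hzeta (2 * m + 1) a + hzeta (2 * m + 1) (-a) - 2 * zval (2 * m + 1)) := by
  have hs : 2 * m + 1 ≠ 0 := by omega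
  have h := (hasSum_hzeta_sub_zval hs a).add (hasSum_hzeta_sub_zval hs (-a))
  rw [Odd.neg_pow ⟨m, rfl⟩, one_div_neg_eq_neg_one_div] at h
  convert h.congr_fun fun n ↦ ?_ using 1 <;> ring

section Binomial

variable {𝕜 : Type*} [NormedField 𝕜]

theorem hasSum_two_mul_choose_mul_pow_even (m : ℕ) {b : 𝕜} (hb : ‖b‖ < 1) :
    HasSum (fun j : ℕ ↦ 2 * ((2 * j + 2 * m + 2).choose (2 * j + 2) : 𝕜) * b ^ (2 * j + 2))
      (1 / (1 - b) ^ (2 * m + 1) + 1 / (1 + b) ^ (2 * m + 1) - 2) := by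
  have h := (hasSum_choose_mul_geometric_of_norm_lt_one (2 * m) hb).add
    (hasSum_choose_mul_geometric_of_norm_lt_one (2 * m) (r := -b) (by rwa [norm_neg]))
  have heven := (hasSum_nat_add_iff' 1).2 (h.comp_two_mul_of_odd_eq_zero fun k hk ↦ by
    rw [hk.neg_pow]; ring)
  simp only [sub_neg_eq_add, Finset.sum_range_one, mul_zero, zero_add, pow_zero,
    Nat.choose_self, Nat.cast_one, mul_one, one_add_one_eq_two] at heven
  refine heven.congr_fun fun j ↦ ?_
  rw [(even_two_mul (j + 1)).neg_pow, show 2 * (j + 1) = 2 * j + 2 by ring,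
    show 2 * j + 2 * m + 2 = 2 * j + 2 + 2 * m by ring, Nat.choose_symm_add]
  ring

theorem hasSum_two_mul_choose_mul_pow_mul_one_div_pow (m : ℕ) {a w : 𝕜} (h : ‖a‖ < ‖w‖) :
    HasSum (fun j : ℕ ↦ 2 * ((2 * j + 2 * m + 2).choose (2 * j + 2) : 𝕜) * a ^ (2 * j + 2) *
        (1 / w ^ (2 * m + 2 * j + 3)))
      (1 / (w + a) ^ (2 * m + 1) + 1 / (w - a) ^ (2 * m + 1) - 2 * (1 / w ^ (2 * m + 1))) := by
  have hw : w ≠ 0 := norm_pos_iff.1 ((norm_nonneg a).trans_lt h)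
  have hb : ‖a / w‖ < 1 := by rwa [norm_div, div_lt_one ((norm_nonneg a).trans_lt h)]
  have hsub : (1 - a / w) * w = w - a := by field_simp
  have hadd : (1 + a / w) * w = w + a := by field_simp
  have hval : (1 / (1 - a / w) ^ (2 * m + 1) + 1 / (1 + a / w) ^ (2 * m + 1) - 2) *
      (1 / w ^ (2 * m + 1)) =
      1 / (w + a) ^ (2 * m + 1) + 1 / (w - a) ^ (2 * m + 1) - 2 * (1 / w ^ (2 * m + 1)) := by
    rw [sub_mul, add_mul, div_mul_div_comm, div_mul_div_comm, one_mul, ← mul_pow, ← mul_pow,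
      hsub, hadd]
    ring
  rw [← hval]
  refine ((hasSum_two_mul_choose_mul_pow_even m hb).mul_right _).congr_fun fun j ↦ ?_
  rw [div_pow, show 2 * m + 2 * j + 3 = (2 * j + 2) + (2 * m + 1) by ring, pow_add]
  field_simp
  ring

end Binomial

theorem summable_two_mul_choose_mul_pow_mul_one_div_pow (m : ℕ) {a : ℂ} (ha : ‖a‖ < 1) :
    Summable fun p : ℕ × ℕ ↦ 2 * ((2 * p.1 + 2 * m + 2).choose (2 * p.1 + 2) : ℂ) *
      a ^ (2 * p.1 + 2) * (1 / ((p.2 : ℂ) + 1) ^ (2 * m + 2 * p.1 + 3)) := by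
  have hcoeff : Summable fun j : ℕ ↦ ‖2 * ((2 * j + 2 * m + 2).choose (2 * j + 2) : ℂ) *
      a ^ (2 * j + 2)‖ := by
    simpa [norm_mul, norm_pow] using (hasSum_two_mul_choose_mul_pow_even (𝕜 := ℝ) m
      (b := ‖a‖) (by rwa [norm_norm])).summable
  refine .of_norm_bounded (hcoeff.mul_norm (summable_one_div_natCast_add_pow 1 le_rfl).norm)
    fun p ↦ ?_
  rw [norm_mul _ (1 / ((p.2 : ℂ) + 1) ^ (2 * m + 2 * p.1 + 3)),
    norm_mul _ (1 / ((p.2 : ℂ) + 1) ^ 2)]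
  gcongr
  simp only [norm_div, norm_one, norm_pow, norm_natCast_add_one]
  exact one_div_pow_le_one_div_pow_of_le (by simp) (by omega)

theorem hurwitz_zeta_sym_expansion_general (m : ℕ) (a : ℂ)
    (ha1 : ‖a‖ < 1) :
    HasSum
      (fun j : ℕ =>
        2 * (Nat.choose (2 * j + 2 * m + 2) (2 * j + 2) : ℂ) *
          zval (2 * m + 2 * j + 3) * a ^ (2 * j + 2))
      (hzeta (2 * m + 1) a + hzeta (2 * m + 1) (-a) - 2 * zval (2 * m + 1)) := by
  refine (hasSum_hzeta_add_hzeta_neg_sub m a).fiberwise_comm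
    (summable_two_mul_choose_mul_pow_mul_one_div_pow m ha1) (fun j ↦ ?_) fun n ↦ ?_
  · rw [mul_right_comm _ (zval _)]
    exact (hasSum_zval (s := 2 * m + 2 * j + 3) (by omega)).mul_left
      (2 * ((2 * j + 2 * m + 2).choose (2 * j + 2) : ℂ) * a ^ (2 * j + 2))
  · have hn : ‖a‖ < ‖(n : ℂ) + 1‖ := by
      rw [norm_natCast_add_one]
      linarith [n.cast_nonneg (α := ℝ)]
    dsimp only
    exact hasSum_two_mul_choose_mul_pow_mul_one_div_pow m hn

/-- Power series expansion of the symmetrized Hurwitz zeta function. -/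
theorem hurwitz_zeta_sym_expansion (m : ℕ) (a : ℂ)
    (ha : 0 < ‖a‖) (ha1 : ‖a‖ < 1) :
    HasSum
      (fun j : ℕ =>
        2 * (Nat.choose (2 * j + 2 * m + 2) (2 * j + 2) : ℂ) *
          zval (2 * m + 2 * j + 3) * a ^ (2 * j + 2))
      (hzeta (2 * m + 1) a + hzeta (2 * m + 1) (-a) - 2 * zval (2 * m + 1)) :=
  hurwitz_zeta_sym_expansion_general m a ha1
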